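/- arXiv:2205.15384 — 6 statements merged into one kernel-verified Lean document; each statement's English description precedes it below -/
import Mathlib

section
/- Let n ≥ 2, let A ∈ SL_n(ℤ) be a hyperbolic matrix, let λ be a real number and α₁, …, α_{n−1} real numbers such that A·(1, α₁, …, α_{n−1})ᵀ = λ·(1, α₁, …, α_{n−1})ᵀ (with A viewed as a real matrix). Then the subfield K = ℚ(α₁, …, α_{n−1}) of ℝ is a totally real number field of degree n over ℚ, and 1, α₁, …, α_{n−1} form a ℚ-basis of K. -/
/-! The eigenvalue `λ` is a root of the characteristic polynomial of `A`, which is irreducible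
over `ℚ`, so `ℚ[λ]` is a field of degree `n`. Since `A` has integer entries, `λ vᵢ = ∑ⱼ Aᵢⱼ vⱼ`:
the `ℚ`-span of the `vᵢ` is stable under multiplication by `λ` and contains `v₀ = 1`, hence
contains `ℚ[λ]`. Having at most `n` generators, it equals `ℚ[λ]`, the `vᵢ` are a basis of it, and
it is the field generated by the `vᵢ`. An embedding into `ℂ` is determined by the image of `λ`,
a root of the characteristic polynomial, which is real by hyperbolicity. -/

open Polynomial Submodule IntermediateField

/-- A matrix `A ∈ GL_n(ℤ)` is *hyperbolic* if its characteristic polynomial is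
irreducible over `ℚ` and all of its complex eigenvalues are real. -/
def Matrix.IsHyperbolicGL {n : ℕ} (A : Matrix (Fin n) (Fin n) ℤ) : Prop :=
  Irreducible (A.charpoly.map (Int.castRingHom ℚ)) ∧
  ∀ z : ℂ, (A.charpoly.map (Int.castRingHom ℂ)).IsRoot z → z.im = 0

namespace Matrix

variable {ι R : Type*} [Fintype ι]

theorem isRoot_charpoly_of_mulVec_eq_smul [DecidableEq ι] [CommRing R] [IsDomain R]
    {M : Matrix ι ι R} {v : ι → R} {μ : R} (hv : v ≠ 0) (h : M *ᵥ v = μ • v) :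
    M.charpoly.IsRoot μ := by
  rw [IsRoot, eval_charpoly, ← exists_mulVec_eq_zero_iff]
  exact ⟨v, hv, by simp [sub_mulVec, h]⟩

theorem map_intCast_mulVec_apply_mem {S : Type*} [Ring R] [SetLike S R] [AddSubgroupClass S R]
    {s : S} (A : Matrix ι ι ℤ) {v : ι → R} (hv : ∀ j, v j ∈ s) (i : ι) :
    (A.map (Int.cast : ℤ → R) *ᵥ v) i ∈ s := by
  simp only [mulVec, dotProduct, map_apply, ← zsmul_eq_mul]
  exact sum_mem fun j _ => zsmul_mem (hv j) _

end Matrix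

theorem Polynomial.aeval_map_intCastRingHom {A : Type*} [Ring A] [Algebra ℚ A] (p : ℤ[X]) (x : A) :
    aeval x (p.map (Int.castRingHom ℚ)) = (p.map (Int.castRingHom A)).eval x := by
  rw [aeval_def, eval₂_map, eval_map]
  congr 1
  exact RingHom.ext_int _ _

section AdjoinSingleton

variable {K L ι : Type*} [Field K] [Ring L] [Algebra K L] {x : L}

theorem mul_mem_span_of_mul_mem {s : Set L} (hs : ∀ y ∈ s, x * y ∈ span K s) {w : L}
    (hw : w ∈ span K s) : x * w ∈ span K s :=
  span_le (p := (span K s).comap (LinearMap.mulLeft K x)) |>.2 hs hw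

theorem Algebra.adjoin_singleton_le_of_mul_mem {W : Submodule K L} (h1 : 1 ∈ W)
    (hx : ∀ w ∈ W, x * w ∈ W) : Subalgebra.toSubmodule (Algebra.adjoin K {x}) ≤ W := by
  have hpow (k : ℕ) : x ^ k ∈ W := by
    induction k with
    | zero => simpa using h1
    | succ k ih => rw [pow_succ']; exact hx _ ih
  intro y hy
  rw [Subalgebra.mem_toSubmodule, Algebra.adjoin_singleton_eq_range_aeval, AlgHom.mem_range] at hy
  obtain ⟨q, rfl⟩ := hy
  rw [aeval_eq_sum_range]
  exact sum_mem fun k _ => W.smul_mem _ (hpow k)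

theorem linearIndependent_and_span_eq_adjoin [Fintype ι] {v : ι → L}
    (hdeg : (minpoly K x).natDegree = Fintype.card ι) (h1 : 1 ∈ span K (Set.range v))
    (hx : ∀ i, x * v i ∈ span K (Set.range v)) :
    LinearIndependent K v ∧
      span K (Set.range v) = Subalgebra.toSubmodule (Algebra.adjoin K {x}) := by
  have hle : Subalgebra.toSubmodule (Algebra.adjoin K {x}) ≤ span K (Set.range v) :=
    Algebra.adjoin_singleton_le_of_mul_mem h1
      fun w => mul_mem_span_of_mul_mem (Set.forall_mem_range.2 hx)
  set P := span K (Set.range fun i : Fin (minpoly K x).natDegree => x ^ (i : ℕ))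
  have hP : Module.finrank K P = Fintype.card ι := by
    rw [finrank_span_eq_card (linearIndependent_pow x), Fintype.card_fin, hdeg]
  have hPle : P ≤ Subalgebra.toSubmodule (Algebra.adjoin K {x}) :=
    span_le.2 <| Set.range_subset_iff.2 fun i =>
      Subalgebra.pow_mem _ (Algebra.self_mem_adjoin_singleton K x) _
  have : FiniteDimensional K (span K (Set.range v)) := .span_of_finite K (Set.finite_range v)
  have hPeq : P = span K (Set.range v) :=
    eq_of_le_of_finrank_le (hPle.trans hle) (hP ▸ finrank_range_le_card v)
  refine ⟨linearIndependent_iff_card_eq_finrank_span.2 (by rw [Set.finrank, ← hPeq, hP]), ?_⟩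
  exact le_antisymm (hPeq ▸ hPle) hle

end AdjoinSingleton

section Subfield

variable {L ι : Type*} [Field L] [CharZero L]

theorem Subfield.coe_closure_range_eq_span {v : ι → L} {x : L} (hx : IsIntegral ℚ x)
    (h : span ℚ (Set.range v) = Subalgebra.toSubmodule (Algebra.adjoin ℚ {x})) :
    (Subfield.closure (Set.range v) : Set L) = span ℚ (Set.range v) := by
  have hF : ((ℚ⟮x⟯ : IntermediateField ℚ L) : Set L) = span ℚ (Set.range v) := by
    rw [h, ← adjoin_simple_toSubalgebra_of_isAlgebraic hx.isAlgebraic]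
    rfl
  refine subset_antisymm ?_ fun y hy => ?_
  · rw [← hF]
    exact (Subfield.closure_le (t := ℚ⟮x⟯.toSubfield)).2 (hF ▸ subset_span)
  · induction hy using span_induction with
    | mem y hy => exact Subfield.subset_closure hy
    | zero => exact zero_mem _
    | add _ _ _ _ h₁ h₂ => exact add_mem h₁ h₂
    | smul q _ _ h => exact SubfieldClass.qsmul_mem _ q h

theorem Subfield.exists_basis_coe_eq (K : Subfield L) {v : ι → L} (hv : LinearIndependent ℚ v)
    (hK : (K : Set L) = span ℚ (Set.range v)) :
    ∃ b : Module.Basis ι ℚ K, ∀ i, (b i : L) = v i := by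
  let f : K →ₗ[ℚ] L := K.subtype.toRatAlgHom.toLinearMap
  have hvK (i : ι) : v i ∈ (K : Set L) := hK ▸ subset_span ⟨i, rfl⟩
  let w : ι → K := fun i => ⟨v i, hvK i⟩
  have hw : f ∘ w = v := rfl
  have hspan : ⊤ ≤ span ℚ (Set.range w) := by
    rintro y -
    have hy : (y : L) ∈ (span ℚ (Set.range w)).map f := by
      rw [map_span, ← Set.range_comp, hw, ← SetLike.mem_coe, ← hK]
      exact y.2
    obtain ⟨z, hz, hzy⟩ := hy
    rwa [← Subtype.ext hzy]
  exact ⟨.mk (LinearIndependent.of_comp f (hw ▸ hv)) hspan, fun i => by simp [w]⟩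

theorem Subfield.im_ringHom_eq_zero_of_mem_adjoin (K : Subfield L) {x : L} (hxK : x ∈ K)
    (hK : ∀ y ∈ K, y ∈ Algebra.adjoin ℚ {x})
    (hreal : ∀ z : ℂ, aeval z (minpoly ℚ x) = 0 → z.im = 0) (σ : K →+* ℂ) (y : K) :
    (σ y).im = 0 := by
  let σ' : K →ₐ[ℚ] ℂ := σ.toRatAlgHom
  let ι : K →ₐ[ℚ] L := K.subtype.toRatAlgHom
  let xK : K := ⟨x, hxK⟩
  obtain ⟨q, hq⟩ : ∃ q : ℚ[X], aeval x q = y := by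
    simpa only [Algebra.adjoin_singleton_eq_range_aeval, AlgHom.mem_range] using hK y y.2
  have hy : aeval xK q = y := Subtype.ext ((aeval_algHom_apply ι xK q).symm.trans hq)
  have hroot : (σ' xK).im = 0 := by
    refine hreal _ ?_
    change aeval (σ' xK) (minpoly ℚ (ι xK)) = 0
    rw [minpoly.algHom_eq ι Subtype.val_injective, aeval_algHom_apply, minpoly.aeval, map_zero]
  have hσx : σ' xK = algebraMap ℝ ℂ (σ' xK).re := Complex.ext (by simp) (by simp [hroot])
  change (σ' y).im = 0
  rw [← hy, ← aeval_algHom_apply, hσx, aeval_algebraMap_apply]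
  exact Complex.ofReal_im _

end Subfield

/-- If `(1, α₁, …, α_{n-1})` is an eigenvector of a hyperbolic matrix
`A ∈ SL_n(ℤ)`, then `K = ℚ(α₁, …, α_{n-1})` is a totally real number field of
degree `n` over `ℚ`, and `1, α₁, …, α_{n-1}` form a `ℚ`-basis of `K`. -/
theorem statement1 (n : ℕ) (hn : 2 ≤ n) (A : Matrix (Fin n) (Fin n) ℤ)
    (hA : A.IsHyperbolicGL)
    (v : Fin n → ℝ) (hv0 : v ⟨0, by omega⟩ = 1) (lam : ℝ)
    (heig : (A.map (Int.cast : ℤ → ℝ)).mulVec v = lam • v) :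
    (∀ σ : Subfield.closure (Set.range v) →+* ℂ, ∀ x, (σ x).im = 0) ∧
    FiniteDimensional ℚ (Subfield.closure (Set.range v)) ∧
    Module.finrank ℚ (Subfield.closure (Set.range v)) = n ∧
    ∃ b : Module.Basis (Fin n) ℚ (Subfield.closure (Set.range v)), ∀ i, (b i : ℝ) = v i := by
  have hroot : aeval lam (A.charpoly.map (Int.castRingHom ℚ)) = 0 := by
    rw [aeval_map_intCastRingHom, ← Matrix.charpoly_map]
    exact Matrix.isRoot_charpoly_of_mulVec_eq_smul (fun h => by simp [h] at hv0) heig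
  have hint : IsIntegral ℚ lam := ⟨_, A.charpoly_monic.map _, hroot⟩
  have hmin : minpoly ℚ lam = A.charpoly.map (Int.castRingHom ℚ) :=
    (minpoly.eq_of_irreducible_of_monic hA.1 hroot (A.charpoly_monic.map _)).symm
  have hdeg : (minpoly ℚ lam).natDegree = Fintype.card (Fin n) := by
    rw [hmin, A.charpoly_monic.natDegree_map, A.charpoly_natDegree_eq_dim]
  have hv (j : Fin n) : v j ∈ span ℚ (Set.range v) := subset_span ⟨j, rfl⟩
  obtain ⟨hli, hspan⟩ := linearIndependent_and_span_eq_adjoin hdeg (hv0 ▸ hv _) fun i => by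
    rw [← smul_eq_mul, ← Pi.smul_apply, ← heig]
    exact Matrix.map_intCast_mulVec_apply_mem A hv i
  have hK := Subfield.coe_closure_range_eq_span hint hspan
  have hadj (y : ℝ) (hy : y ∈ Subfield.closure (Set.range v)) : y ∈ Algebra.adjoin ℚ {lam} := by
    rw [← Subalgebra.mem_toSubmodule, ← hspan, ← SetLike.mem_coe, ← hK]
    exact hy
  obtain ⟨b, hb⟩ := Subfield.exists_basis_coe_eq _ hli hK
  refine ⟨Subfield.im_ringHom_eq_zero_of_mem_adjoin _ ?_ hadj ?_, b.finiteDimensional_of_finite,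
    by rw [Module.finrank_eq_card_basis b, Fintype.card_fin], b, hb⟩
  · rw [← SetLike.mem_coe, hK, hspan]
    exact Algebra.self_mem_adjoin_singleton ℚ lam
  · intro z hz
    rw [hmin, aeval_map_intCastRingHom] at hz
    exact hA.2 z hz
end

section
/- Let n ≥ 2 and let α₁, …, α_{n−1} be real numbers such that 1, α₁, …, α_{n−1} are linearly independent over ℚ. Let G be an n×n integer matrix with determinant ±1, G ≠ I_n and G ≠ −I_n, and suppose G·(1, α₁, …, α_{n−1})ᵀ = λ·(1, α₁, …, α_{n−1})ᵀ for some real number λ. Then λ is irrational. -/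
/-!
If `λ = r` were rational, then `(G - r I) v = 0` is a vanishing `ℚ`-linear combination of the
coordinates of `v`, so `G = r I` by linear independence. Hence `r` is an integer, and
`det G = r ^ n = ±1` forces `r = ±1`, i.e. `G = ±I`.
-/

namespace Matrix

variable {m ι K L : Type*} [Fintype ι] [CommRing K] [Ring L] [Algebra K L] {v : ι → L}

theorem eq_zero_of_map_mulVec_eq_zero (hv : LinearIndependent K v) {B : Matrix m ι K}
    (h : B.map (algebraMap K L) *ᵥ v = 0) : B = 0 := by
  ext i j
  refine Fintype.linearIndependent_iff.mp hv (B i) ?_ j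
  simpa [mulVec, dotProduct, Algebra.smul_def] using congrFun h i

theorem eq_smul_one_of_map_mulVec_eq_smul [DecidableEq ι] (hv : LinearIndependent K v)
    {B : Matrix ι ι K} {c : K} (h : B.map (algebraMap K L) *ᵥ v = algebraMap K L c • v) :
    B = c • 1 := by
  rw [← sub_eq_zero]
  refine eq_zero_of_map_mulVec_eq_zero hv ?_
  rw [Matrix.map_sub _ (map_sub _), sub_mulVec, h, Matrix.map_smul' _ _ _ (map_mul _),
    Matrix.map_one _ (map_zero _) (map_one _), smul_mulVec, one_mulVec, sub_self]

theorem smul_one_eq_one_or_neg_one_of_isUnit_det [DecidableEq ι] [Nonempty ι] {a : ℤ}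
    (h : IsUnit (a • (1 : Matrix ι ι ℤ)).det) :
    a • (1 : Matrix ι ι ℤ) = 1 ∨ a • (1 : Matrix ι ι ℤ) = -1 := by
  rw [det_smul, det_one, mul_one, isUnit_pow_iff Fintype.card_ne_zero, Int.isUnit_iff] at h
  rcases h with rfl | rfl
  · exact Or.inl (one_smul _ _)
  · exact Or.inr (neg_one_smul _ _)

end Matrix

/-- If `1, α₁, …, α_{n-1}` are linearly independent over `ℚ`, `G` is an
`n × n` integer matrix with determinant `±1`, `G ≠ ±I_n`, and
`G·(1, α₁, …, α_{n-1})ᵀ = λ·(1, α₁, …, α_{n-1})ᵀ`, then `λ` is irrational. -/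
theorem statement3 (n : ℕ) (hn : 2 ≤ n) (v : Fin n → ℝ)
    (hli : LinearIndependent ℚ v)
    (G : Matrix (Fin n) (Fin n) ℤ) (hdet : G.det = 1 ∨ G.det = -1)
    (hG1 : G ≠ 1) (hG2 : G ≠ -1) (lam : ℝ)
    (heig : (G.map (Int.cast : ℤ → ℝ)).mulVec v = lam • v) :
    Irrational lam := by
  rintro ⟨r, rfl⟩
  have hrat : G.map (Int.cast : ℤ → ℚ) = r • 1 := by
    refine Matrix.eq_smul_one_of_map_mulVec_eq_smul hli ?_
    simpa [Matrix.map_map, Function.comp_def] using heig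
  let i : Fin n := ⟨0, by omega⟩
  have hscalar : G = G i i • 1 := by
    refine Matrix.map_injective (f := (Int.cast : ℤ → ℚ)) Int.cast_injective ?_
    have hr : (G i i : ℚ) = r := by simpa using congrFun (congrFun hrat i) i
    simp only [hrat, hr, Matrix.map_smul' _ _ _ Int.cast_mul,
      Matrix.map_one _ Int.cast_zero Int.cast_one]
  rw [hscalar] at hdet hG1 hG2
  have : Nonempty (Fin n) := ⟨i⟩
  exact (Matrix.smul_one_eq_one_or_neg_one_of_isUnit_det (Int.isUnit_iff.mpr hdet)).elim hG1 hG2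
end

section
/- Let A ∈ GL₄(ℤ) be a hyperbolic matrix with (necessarily distinct) real eigenvalues and corresponding eigenvectors v₁, v₂, v₃, v₄ ∈ ℝ⁴. Then there is no matrix G ∈ GL₄(ℤ) with G ≠ I₄ and G ≠ −I₄ for which there exist nonzero real numbers μ₁, μ₂, μ₃, μ₄ such that G·v₁ = μ₁·v₁, G·v₂ = μ₂·v₂, G·v₃ = μ₃·v₄ and G·v₄ = μ₄·v₃. -/
/-!
Conjugating `A` by `G` gives an integer matrix `B = G A G⁻¹` with the same eigenvectors, but with
the eigenvalues `λ₃, λ₄` of `v₃, v₄` swapped. Hence `A - B` has eigenvalues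
`0, 0, λ₃ - λ₄, λ₄ - λ₃`, and the integers `tr (A (A - B)) = (λ₃ - λ₄)²` and
`tr (A² (A - B)) = (λ₃ - λ₄)² (λ₃ + λ₄)` show that `λ₃ + λ₄` and `λ₃ λ₄` are rational. So `λ₃` has
degree at most `2` over `ℚ`, whereas its minimal polynomial is the irreducible quartic
characteristic polynomial of `A`.
-/

/-- A matrix `A ∈ GL₄(ℤ)` is *hyperbolic* if its characteristic polynomial is
irreducible over `ℚ` and all of its complex eigenvalues are real. -/
def Matrix.IsHyperbolicGL4 (A : Matrix (Fin 4) (Fin 4) ℤ) : Prop :=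
  Irreducible (A.charpoly.map (Int.castRingHom ℚ)) ∧
  ∀ z : ℂ, (A.charpoly.map (Int.castRingHom ℂ)).IsRoot z → z.im = 0

open Polynomial Matrix Module

namespace Matrix

variable {K n : Type*} [Field K] [Fintype n] [DecidableEq n]

theorem mulVec_conj_eq_smul {M G G' : Matrix n n K} (hG : G' * G = 1) {x y : n → K} {a μ : K}
    (hμ : μ ≠ 0) (hx : M *ᵥ x = a • x) (hGx : G *ᵥ x = μ • y) :
    (G * M * G') *ᵥ y = a • y := by
  have hG'y : G' *ᵥ y = μ⁻¹ • x := by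
    rw [eq_inv_smul_iff₀ hμ, ← mulVec_smul, ← hGx, mulVec_mulVec, hG, one_mulVec]
  rw [← mulVec_mulVec, ← mulVec_mulVec, hG'y, mulVec_smul, hx, mulVec_smul, mulVec_smul, hGx,
    smul_comm a, inv_smul_smul₀ hμ]

theorem pow_mulVec_eq_smul {M : Matrix n n K} {x : n → K} {a : K} (hx : M *ᵥ x = a • x) (k : ℕ) :
    M ^ k *ᵥ x = a ^ k • x := by
  induction k with
  | zero => simp
  | succ k ih => rw [pow_succ, ← mulVec_mulVec, hx, mulVec_smul, ih, smul_smul, pow_succ']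

theorem trace_eq_sum_of_mulVec_eq_smul {M : Matrix n n K} {v : n → n → K}
    (hv : LinearIndependent K v) {d : n → K} (h : ∀ i, M *ᵥ v i = d i • v i) :
    M.trace = ∑ i, d i := by
  let b := basisOfLinearIndependentOfCardEqFinrank' v hv (by simp)
  have hdiag : LinearMap.toMatrix b b M.toLin' = diagonal d := by
    ext i j
    rw [LinearMap.toMatrix_apply, toLin'_apply, coe_basisOfLinearIndependentOfCardEqFinrank', h j,
      ← coe_basisOfLinearIndependentOfCardEqFinrank' v hv (by simp), map_smul, Basis.repr_self]
    by_cases hij : i = j <;> simp [hij]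
  rw [← trace_toLin'_eq, LinearMap.trace_eq_matrix_trace K b, hdiag, trace_diagonal]

theorem trace_pow_mul_sub_eq_sum {A B : Matrix n n K} {v : n → n → K}
    (hv : LinearIndependent K v) {α β : n → K} (hA : ∀ i, A *ᵥ v i = α i • v i)
    (hB : ∀ i, B *ᵥ v i = β i • v i) (k : ℕ) :
    (A ^ k * (A - B)).trace = ∑ i, α i ^ k * (α i - β i) := by
  refine trace_eq_sum_of_mulVec_eq_smul hv fun i => ?_
  rw [← mulVec_mulVec, sub_mulVec, hA, hB, ← sub_smul, mulVec_smul, pow_mulVec_eq_smul (hA i),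
    smul_smul, mul_comm]

theorem isRoot_charpoly_of_mulVec_eq_smul_s6 {M : Matrix n n K} {x : n → K} {a : K} (hx : x ≠ 0)
    (h : M *ᵥ x = a • x) : M.charpoly.IsRoot a := by
  rw [← mem_spectrum_iff_isRoot_charpoly, ← spectrum_toLin']
  exact (Module.End.hasEigenvalue_of_hasEigenvector
    ⟨Module.End.mem_eigenspace_iff.2 (by rwa [toLin'_apply]), hx⟩).mem_spectrum

theorem minpoly_eq_charpoly_map_of_irreducible {L : Type*} [Field L] [CharZero L]
    {A : Matrix n n ℤ} (hA : Irreducible (A.charpoly.map (Int.castRingHom ℚ))) {x : n → L} {a : L}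
    (hx : x ≠ 0) (h : A.map (Int.cast : ℤ → L) *ᵥ x = a • x) :
    minpoly ℚ a = A.charpoly.map (Int.castRingHom ℚ) := by
  refine (minpoly.eq_of_irreducible_of_monic hA ?_ (A.charpoly_monic.map _)).symm
  rw [aeval_def, eval₂_map, show (algebraMap ℚ L).comp (Int.castRingHom ℚ) = Int.castRingHom L
    from Subsingleton.elim _ _, ← eval_map, ← charpoly_map]
  exact isRoot_charpoly_of_mulVec_eq_smul_s6 hx h

end Matrix

theorem natDegree_minpoly_le_two_of_add_mul {K L : Type*} [Field K] [CommRing L] [Algebra K L]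
    {x y : L} {s p : K} (hs : algebraMap K L s = x + y) (hp : algebraMap K L p = x * y) :
    (minpoly K x).natDegree ≤ 2 := by
  have hdeg : (X ^ 2 - C s * X + C p).natDegree = 2 := by compute_degree!
  have hroot : aeval x (X ^ 2 - C s * X + C p) = 0 := by
    simp only [map_add, map_sub, map_pow, map_mul, aeval_X, aeval_C, hs, hp]
    ring
  calc (minpoly K x).natDegree ≤ (X ^ 2 - C s * X + C p).natDegree :=
        natDegree_le_of_dvd (minpoly.dvd K x hroot) fun h0 => by simp [h0] at hdeg
    _ = 2 := hdeg

theorem exists_algebraMap_eq_add_mul {K L : Type*} [Field K] [Field L] [Algebra K L]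
    (h2 : (2 : L) ≠ 0) {a b : L} (hab : a ≠ b) {t₁ t₂ : K}
    (h₁ : algebraMap K L t₁ = (a - b) ^ 2) (h₂ : algebraMap K L t₂ = (a - b) ^ 2 * (a + b)) :
    ∃ s p : K, algebraMap K L s = a + b ∧ algebraMap K L p = a * b := by
  have hd : (a - b) ^ 2 ≠ 0 := pow_ne_zero 2 (sub_ne_zero.2 hab)
  have hs : algebraMap K L (t₂ / t₁) = a + b := by
    rw [map_div₀, h₁, h₂, mul_div_cancel_left₀ _ hd]
  refine ⟨t₂ / t₁, ((t₂ / t₁) ^ 2 - t₁) / 4, hs, ?_⟩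
  rw [map_div₀, map_sub, map_pow, hs, h₁, map_ofNat]
  have h4 : (4 : L) ≠ 0 := by
    rw [show (4 : L) = 2 * 2 by norm_num]; exact mul_ne_zero h2 h2
  field_simp
  ring

theorem Fin.sum_pow_mul_sub_comp_swap {R : Type*} [CommRing R] (f : Fin 4 → R) (k : ℕ) :
    ∑ i, f i ^ k * (f i - f (Equiv.swap 2 3 i)) = (f 2 ^ k - f 3 ^ k) * (f 2 - f 3) := by
  simp only [Fin.sum_univ_four, Fin.isValue, ne_eq, Fin.reduceEq, not_false_eq_true,
    Equiv.swap_apply_of_ne_of_ne, Equiv.swap_apply_left, Equiv.swap_apply_right, sub_self,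
    mul_zero, add_zero, zero_add]
  ring

theorem statement6_general (A : Matrix (Fin 4) (Fin 4) ℤ)
    (hA : A.IsHyperbolicGL4)
    (lam : Fin 4 → ℝ) (hlam : Function.Injective lam)
    (v : Fin 4 → Fin 4 → ℝ) (hv : ∀ i, v i ≠ 0)
    (heig : ∀ i, (A.map (Int.cast : ℤ → ℝ)).mulVec (v i) = lam i • v i) :
    ¬ ∃ G : Matrix (Fin 4) (Fin 4) ℤ, (G.det = 1 ∨ G.det = -1) ∧ G ≠ 1 ∧ G ≠ -1 ∧
      ∃ μ₁ μ₂ μ₃ μ₄ : ℝ, μ₁ ≠ 0 ∧ μ₂ ≠ 0 ∧ μ₃ ≠ 0 ∧ μ₄ ≠ 0 ∧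
        (G.map (Int.cast : ℤ → ℝ)).mulVec (v 0) = μ₁ • v 0 ∧
        (G.map (Int.cast : ℤ → ℝ)).mulVec (v 1) = μ₂ • v 1 ∧
        (G.map (Int.cast : ℤ → ℝ)).mulVec (v 2) = μ₃ • v 3 ∧
        (G.map (Int.cast : ℤ → ℝ)).mulVec (v 3) = μ₄ • v 2 := by
  rintro ⟨G, hdetG, -, -, μ₁, μ₂, μ₃, μ₄, hμ₁, hμ₂, hμ₃, hμ₄, hG₀, hG₁, hG₂, hG₃⟩
  let φ := (Int.castRingHom ℝ).mapMatrix (m := Fin 4)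
  have hGinv : φ G⁻¹ * φ G = 1 := by
    rw [← map_mul, nonsing_inv_mul G (by rcases hdetG with h | h <;> simp [h]), map_one]
  set B := G * A * G⁻¹
  have hB : ∀ i, φ B *ᵥ v i = lam (Equiv.swap 2 3 i) • v i := by
    simp only [B, map_mul]
    intro i
    fin_cases i
    · exact mulVec_conj_eq_smul hGinv hμ₁ (heig 0) hG₀
    · exact mulVec_conj_eq_smul hGinv hμ₂ (heig 1) hG₁
    · exact mulVec_conj_eq_smul hGinv hμ₄ (heig 3) hG₃
    · exact mulVec_conj_eq_smul hGinv hμ₃ (heig 2) hG₂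
  have hli : LinearIndependent ℝ v :=
    Module.End.eigenvectors_linearIndependent' (toLin' (A.map Int.cast)) lam hlam v
      fun i => ⟨Module.End.mem_eigenspace_iff.2 (by rw [toLin'_apply, heig]), hv i⟩
  have htrace (k : ℕ) :
      ((A ^ k * (A - B)).trace : ℝ) = ∑ i, lam i ^ k * (lam i - lam (Equiv.swap 2 3 i)) := by
    rw [← eq_intCast (Int.castRingHom ℝ), AddMonoidHom.map_trace]
    change (φ (A ^ k * (A - B))).trace = _
    rw [map_mul, map_pow, map_sub]
    exact trace_pow_mul_sub_eq_sum hli heig hB k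
  obtain ⟨s, p, hs, hp⟩ :=
    exists_algebraMap_eq_add_mul two_ne_zero (hlam.ne (by decide : (2 : Fin 4) ≠ 3))
    (t₁ := ((A ^ 1 * (A - B)).trace : ℚ)) (t₂ := ((A ^ 2 * (A - B)).trace : ℚ))
    (by rw [eq_ratCast, Rat.cast_intCast, htrace, Fin.sum_pow_mul_sub_comp_swap]; ring)
    (by rw [eq_ratCast, Rat.cast_intCast, htrace, Fin.sum_pow_mul_sub_comp_swap]; ring)
  have hdeg := natDegree_minpoly_le_two_of_add_mul hs hp
  rw [minpoly_eq_charpoly_map_of_irreducible hA.1 (hv 2) (heig 2),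
    A.charpoly_monic.natDegree_map, charpoly_natDegree_eq_dim, Fintype.card_fin] at hdeg
  omega

/-- For a hyperbolic `A ∈ GL₄(ℤ)` with (necessarily distinct) real
eigenvalues and eigenvectors `v₁, v₂, v₃, v₄`, there is no `G ∈ GL₄(ℤ)` with
`G ≠ ±I₄` such that `G·v₁ = μ₁v₁`, `G·v₂ = μ₂v₂`, `G·v₃ = μ₃v₄`,
`G·v₄ = μ₄v₃` for nonzero reals `μ₁, μ₂, μ₃, μ₄`. -/
theorem statement6 (A : Matrix (Fin 4) (Fin 4) ℤ) (hdetA : A.det = 1 ∨ A.det = -1)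
    (hA : A.IsHyperbolicGL4)
    (lam : Fin 4 → ℝ) (hlam : Function.Injective lam)
    (v : Fin 4 → Fin 4 → ℝ) (hv : ∀ i, v i ≠ 0)
    (heig : ∀ i, (A.map (Int.cast : ℤ → ℝ)).mulVec (v i) = lam i • v i) :
    ¬ ∃ G : Matrix (Fin 4) (Fin 4) ℤ, (G.det = 1 ∨ G.det = -1) ∧ G ≠ 1 ∧ G ≠ -1 ∧
      ∃ μ₁ μ₂ μ₃ μ₄ : ℝ, μ₁ ≠ 0 ∧ μ₂ ≠ 0 ∧ μ₃ ≠ 0 ∧ μ₄ ≠ 0 ∧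
        (G.map (Int.cast : ℤ → ℝ)).mulVec (v 0) = μ₁ • v 0 ∧
        (G.map (Int.cast : ℤ → ℝ)).mulVec (v 1) = μ₂ • v 1 ∧
        (G.map (Int.cast : ℤ → ℝ)).mulVec (v 2) = μ₃ • v 3 ∧
        (G.map (Int.cast : ℤ → ℝ)).mulVec (v 3) = μ₄ • v 2 :=
  statement6_general A hA lam hlam v hv heig
end

section
/- Let G be a 4×4 integer matrix with determinant ±1, let v₁, v₂, v₃, v₄ be a basis of ℝ⁴, and let μ₁, μ₂, μ₃, μ₄ be nonzero real numbers such that G·v₁ = μ₃·v₃, G·v₂ = μ₄·v₄, G·v₃ = μ₁·v₁ and G·v₄ = μ₂·v₂. Suppose μ₁μ₃ > 0 and μ₂μ₄ > 0, and suppose 1 is a (real) eigenvalue of G. Then μ₁μ₃ = 1 and μ₂μ₄ = 1. -/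
/-!
The square of `G` preserves each basis vector: it acts by `a = μ₁μ₃` on `v₁, v₃` and by
`b = μ₂μ₄` on `v₂, v₄`. Hence `det G² = a²b²`, which is `(det G)² = 1`, so `ab = 1` since
`ab > 0`. A fixed vector of `G` is fixed by `G²`, so `a = 1` or `b = 1`, and then `ab = 1`
forces the other one to be `1` as well.
-/

namespace Module.Basis

variable {ι R M : Type*} [CommRing R] [AddCommGroup M] [Module R M]

theorem det_eq_prod_of_apply_eq_smul [Fintype ι] [DecidableEq ι] (b : Basis ι R M)
    {f : M →ₗ[R] M} {d : ι → R} (hf : ∀ i, f (b i) = d i • b i) :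
    LinearMap.det f = ∏ i, d i := by
  have hdiag : LinearMap.toMatrix b b f = Matrix.diagonal d := by
    ext i j
    by_cases hij : i = j <;> simp [LinearMap.toMatrix_apply, hf, hij]
  rw [← LinearMap.det_toMatrix b, hdiag, Matrix.det_diagonal]

theorem exists_eq_one_of_apply_eq_smul [IsDomain R] (b : Basis ι R M)
    {f : M →ₗ[R] M} {d : ι → R} (hf : ∀ i, f (b i) = d i • b i)
    {w : M} (hw0 : w ≠ 0) (hw : f w = w) : ∃ i, d i = 1 := by
  obtain ⟨i, hi⟩ : ∃ i, b.repr w i ≠ 0 := by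
    by_contra! h
    exact hw0 (b.repr.map_eq_zero_iff.1 (Finsupp.ext h))
  have hcoord : b.coord i ∘ₗ f = d i • b.coord i :=
    b.ext fun j => by by_cases hji : j = i <;> simp [hf, hji]
  refine ⟨i, mul_right_cancel₀ hi ?_⟩
  simpa [hw] using (LinearMap.congr_fun hcoord w).symm

end Module.Basis

theorem LinearMap.apply_apply_of_apply_eq_smul_of_apply_eq_smul {R M : Type*} [CommSemiring R]
    [AddCommMonoid M] [Module R M] {f : M →ₗ[R] M} {u v : M} {α β : R}
    (hu : f u = α • v) (hv : f v = β • u) :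
    f (f u) = (β * α) • u ∧ f (f v) = (β * α) • v := by
  constructor
  · rw [hu, map_smul, hv, smul_smul, mul_comm]
  · rw [hv, map_smul, hu, smul_smul]

theorem statement7_general (G : Matrix (Fin 4) (Fin 4) ℤ) (hdet : G.det = 1 ∨ G.det = -1)
    (B : Module.Basis (Fin 4) ℝ (Fin 4 → ℝ))
    (μ₁ μ₂ μ₃ μ₄ : ℝ)
    (e1 : (G.map (Int.cast : ℤ → ℝ)).mulVec (B 0) = μ₃ • B 2)
    (e2 : (G.map (Int.cast : ℤ → ℝ)).mulVec (B 1) = μ₄ • B 3)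
    (e3 : (G.map (Int.cast : ℤ → ℝ)).mulVec (B 2) = μ₁ • B 0)
    (e4 : (G.map (Int.cast : ℤ → ℝ)).mulVec (B 3) = μ₂ • B 1)
    (hpos13 : 0 < μ₁ * μ₃) (hpos24 : 0 < μ₂ * μ₄)
    (hev : ∃ w : Fin 4 → ℝ, w ≠ 0 ∧ (G.map (Int.cast : ℤ → ℝ)).mulVec w = w) :
    μ₁ * μ₃ = 1 ∧ μ₂ * μ₄ = 1 := by
  set f := Matrix.toLin' (G.map (Int.cast : ℤ → ℝ))
  obtain ⟨h00, h22⟩ := LinearMap.apply_apply_of_apply_eq_smul_of_apply_eq_smul (f := f) e1 e3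
  obtain ⟨h11, h33⟩ := LinearMap.apply_apply_of_apply_eq_smul_of_apply_eq_smul (f := f) e2 e4
  have hsq : ∀ i, (f * f) (B i) = ![μ₁ * μ₃, μ₂ * μ₄, μ₁ * μ₃, μ₂ * μ₄] i • B i := by
    intro i
    fin_cases i <;> assumption
  have hdet_sq : (μ₁ * μ₃ * (μ₂ * μ₄)) ^ 2 = 1 := by
    have := B.det_eq_prod_of_apply_eq_smul hsq
    rw [map_mul, LinearMap.det_toLin', ← Int.cast_det, Fin.prod_univ_four] at this
    rcases hdet with h | h <;> rw [h] at this <;> push_cast at this <;> linear_combination -this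
  have hprod : μ₁ * μ₃ * (μ₂ * μ₄) = 1 :=
    (pow_eq_one_iff_of_nonneg (mul_pos hpos13 hpos24).le two_ne_zero).1 hdet_sq
  obtain ⟨w, hw0, hw⟩ := hev
  obtain ⟨i, hi⟩ := B.exists_eq_one_of_apply_eq_smul hsq hw0 (by simp [f, hw])
  have hone : μ₁ * μ₃ = 1 ∨ μ₂ * μ₄ = 1 := by
    fin_cases i <;> simp at hi <;> simp [hi]
  rcases hone with h | h
  · exact ⟨h, by simpa [h] using hprod⟩
  · exact ⟨by simpa [h] using hprod, h⟩

/-- If `G` is an integer matrix with determinant `±1` and, with respect to a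
basis `v₁, v₂, v₃, v₄` of `ℝ⁴`, `G·v₁ = μ₃v₃`, `G·v₂ = μ₄v₄`, `G·v₃ = μ₁v₁`,
`G·v₄ = μ₂v₂` with `μ₁μ₃ > 0`, `μ₂μ₄ > 0`, and `1` is an eigenvalue of `G`,
then `μ₁μ₃ = μ₂μ₄ = 1`. -/
theorem statement7 (G : Matrix (Fin 4) (Fin 4) ℤ) (hdet : G.det = 1 ∨ G.det = -1)
    (B : Module.Basis (Fin 4) ℝ (Fin 4 → ℝ))
    (μ₁ μ₂ μ₃ μ₄ : ℝ) (h1 : μ₁ ≠ 0) (h2 : μ₂ ≠ 0) (h3 : μ₃ ≠ 0) (h4 : μ₄ ≠ 0)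
    (e1 : (G.map (Int.cast : ℤ → ℝ)).mulVec (B 0) = μ₃ • B 2)
    (e2 : (G.map (Int.cast : ℤ → ℝ)).mulVec (B 1) = μ₄ • B 3)
    (e3 : (G.map (Int.cast : ℤ → ℝ)).mulVec (B 2) = μ₁ • B 0)
    (e4 : (G.map (Int.cast : ℤ → ℝ)).mulVec (B 3) = μ₂ • B 1)
    (hpos13 : 0 < μ₁ * μ₃) (hpos24 : 0 < μ₂ * μ₄)
    (hev : ∃ w : Fin 4 → ℝ, w ≠ 0 ∧ (G.map (Int.cast : ℤ → ℝ)).mulVec w = w) :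
    μ₁ * μ₃ = 1 ∧ μ₂ * μ₄ = 1 :=
  statement7_general G hdet B μ₁ μ₂ μ₃ μ₄ e1 e2 e3 e4 hpos13 hpos24 hev
end

section
/- Let G be a 4×4 integer matrix, let v₁, v₂, v₃, v₄ be a basis of ℝ⁴, and let μ₁, μ₂, μ₃, μ₄ be nonzero real numbers such that G·v₁ = μ₃·v₃, G·v₂ = μ₄·v₄, G·v₃ = μ₁·v₁ and G·v₄ = μ₂·v₂. If μ₁μ₃ = 1 and μ₂μ₄ = 1, then the characteristic polynomial of G equals X⁴ − 2X² + 1 = (X² − 1)², and there exists a nonzero integer vector z ∈ ℤ⁴ with G·z = z. -/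
open Polynomial Matrix

/-!
In the basis `v₁, v₂, v₃, v₄` the matrix of `G` only pairs `v₁ ↔ v₃` and `v₂ ↔ v₄`, so its
characteristic polynomial is `(X² − μ₁μ₃)(X² − μ₂μ₄) = (X² − 1)²`. This polynomial has integer
coefficients, so it is also the characteristic polynomial of `G` over `ℤ`; since `1` is a root,
`1` is an eigenvalue of `G` over the domain `ℤ`, with an integer eigenvector.
-/

namespace Matrix

theorem charpoly_pairSwap_fin_four {R : Type*} [CommRing R] (a b c d : R) :
    !![0, 0, a, 0; 0, 0, 0, b; c, 0, 0, 0; 0, d, 0, 0].charpoly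
      = (X ^ 2 - C (a * c)) * (X ^ 2 - C (b * d)) := by
  rw [charpoly, det_succ_row_zero]
  simp [Fin.sum_univ_succ, det_fin_three, charmatrix_apply, Fin.succAbove]
  ring

theorem exists_mulVec_eq_smul_of_isRoot_charpoly {n R : Type*} [Fintype n] [DecidableEq n]
    [CommRing R] [IsDomain R] {M : Matrix n n R} {r : R} (h : M.charpoly.IsRoot r) :
    ∃ v ≠ 0, M *ᵥ v = r • v := by
  rw [← charpoly_toLin', ← Module.End.hasEigenvalue_iff_isRoot_charpoly] at h
  obtain ⟨v, hv, hv0⟩ := h.exists_hasEigenvector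
  exact ⟨v, hv0, Module.End.mem_eigenspace_iff.mp hv⟩

end Matrix

namespace LinearMap

variable {R V : Type*} [CommRing R] [AddCommGroup V] [Module R V]
  (B : Module.Basis (Fin 4) R V) {f : V →ₗ[R] V} {a b c d : R}

theorem toMatrix_eq_pairSwap (h0 : f (B 0) = c • B 2) (h1 : f (B 1) = d • B 3)
    (h2 : f (B 2) = a • B 0) (h3 : f (B 3) = b • B 1) :
    toMatrix B B f = !![0, 0, a, 0; 0, 0, 0, b; c, 0, 0, 0; 0, d, 0, 0] := by
  ext i j
  rw [toMatrix_apply]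
  fin_cases i <;> fin_cases j <;> simp [h0, h1, h2, h3]

theorem charpoly_eq_of_pairSwap [Module.Free R V] [Module.Finite R V]
    (h0 : f (B 0) = c • B 2) (h1 : f (B 1) = d • B 3)
    (h2 : f (B 2) = a • B 0) (h3 : f (B 3) = b • B 1) :
    f.charpoly = (X ^ 2 - C (a * c)) * (X ^ 2 - C (b * d)) := by
  rw [← charpoly_toMatrix f B, toMatrix_eq_pairSwap B h0 h1 h2 h3,
    Matrix.charpoly_pairSwap_fin_four]

end LinearMap

theorem statement8_general (G : Matrix (Fin 4) (Fin 4) ℤ)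
    (B : Module.Basis (Fin 4) ℝ (Fin 4 → ℝ))
    (μ₁ μ₂ μ₃ μ₄ : ℝ)
    (e1 : (G.map (Int.cast : ℤ → ℝ)).mulVec (B 0) = μ₃ • B 2)
    (e2 : (G.map (Int.cast : ℤ → ℝ)).mulVec (B 1) = μ₄ • B 3)
    (e3 : (G.map (Int.cast : ℤ → ℝ)).mulVec (B 2) = μ₁ • B 0)
    (e4 : (G.map (Int.cast : ℤ → ℝ)).mulVec (B 3) = μ₂ • B 1)
    (hm13 : μ₁ * μ₃ = 1) (hm24 : μ₂ * μ₄ = 1) :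
    (G.map (Int.cast : ℤ → ℝ)).charpoly = X ^ 4 - 2 * X ^ 2 + 1 ∧
    ∃ z : Fin 4 → ℤ, z ≠ 0 ∧ G.mulVec z = z := by
  set M := G.map (Int.cast : ℤ → ℝ)
  have hM : M.charpoly = X ^ 4 - 2 * X ^ 2 + 1 := by
    rw [← toLin'_apply] at e1 e2 e3 e4
    rw [← charpoly_toLin', LinearMap.charpoly_eq_of_pairSwap B e1 e2 e3 e4, hm13, hm24, C_1]
    ring
  have hG : G.charpoly = X ^ 4 - 2 * X ^ 2 + 1 := by
    apply map_injective (Int.castRingHom ℝ) Int.cast_injective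
    rw [← charpoly_map]
    simpa using hM
  obtain ⟨z, hz, hGz⟩ := exists_mulVec_eq_smul_of_isRoot_charpoly (M := G) (r := 1) (by simp [hG])
  exact ⟨hM, z, hz, by simpa using hGz⟩

/-- If `G` is an integer matrix and, with respect to a basis `v₁, v₂, v₃, v₄`
of `ℝ⁴`, `G·v₁ = μ₃v₃`, `G·v₂ = μ₄v₄`, `G·v₃ = μ₁v₁`, `G·v₄ = μ₂v₂` with
`μ₁μ₃ = μ₂μ₄ = 1`, then the characteristic polynomial of `G` equals
`X⁴ − 2X² + 1` and `G` fixes a nonzero integer vector. -/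
theorem statement8 (G : Matrix (Fin 4) (Fin 4) ℤ)
    (B : Module.Basis (Fin 4) ℝ (Fin 4 → ℝ))
    (μ₁ μ₂ μ₃ μ₄ : ℝ) (h1 : μ₁ ≠ 0) (h2 : μ₂ ≠ 0) (h3 : μ₃ ≠ 0) (h4 : μ₄ ≠ 0)
    (e1 : (G.map (Int.cast : ℤ → ℝ)).mulVec (B 0) = μ₃ • B 2)
    (e2 : (G.map (Int.cast : ℤ → ℝ)).mulVec (B 1) = μ₄ • B 3)
    (e3 : (G.map (Int.cast : ℤ → ℝ)).mulVec (B 2) = μ₁ • B 0)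
    (e4 : (G.map (Int.cast : ℤ → ℝ)).mulVec (B 3) = μ₂ • B 1)
    (hm13 : μ₁ * μ₃ = 1) (hm24 : μ₂ * μ₄ = 1) :
    (G.map (Int.cast : ℤ → ℝ)).charpoly = X ^ 4 - 2 * X ^ 2 + 1 ∧
    ∃ z : Fin 4 → ℤ, z ≠ 0 ∧ G.mulVec z = z :=
  statement8_general G B μ₁ μ₂ μ₃ μ₄ e1 e2 e3 e4 hm13 hm24
end

section
/- The real number √(4 − √2) does not belong to the subfield ℚ(√(4 + √2)) of ℝ; in other words, the subfields ℚ(√(4 + √2)) and ℚ(√(4 − √2)) of ℝ are distinct. -/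
/-!
Write `α = √(4 + √2)` and `β = √(4 - √2)`. Since `α² ∈ ℚ(√2)`, every element of `ℚ(α)` has the
form `x + y α` with `x, y ∈ ℚ(√2)`, and as `α ∉ ℚ(√2)`, such an element whose square lies in
`ℚ(√2)` is in `ℚ(√2)` or in `ℚ(√2) α`. Neither holds for `β`: `4 - √2` is not a square in
`ℚ(√2)`, because its norm `14` is not a rational square, and `β = y α` would make
`y (4 + √2) = α β = √14` an element of `ℚ(√2)`.
-/

namespace Subfield

variable {L : Type*} [Field L]

theorem eq_zero_of_add_mul_eq_zero {K : Subfield L} {a x y : L} (ha : a ∉ K) (hx : x ∈ K)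
    (hy : y ∈ K) (h : x + y * a = 0) : x = 0 ∧ y = 0 := by
  have hy0 : y = 0 := by
    by_contra hy0
    have : a = -x / y := by field_simp; linear_combination h
    exact ha (this ▸ div_mem (neg_mem hx) hy)
  exact ⟨by simpa [hy0] using h, hy0⟩

/-- When `a ^ 2 ∈ K`, the field `K(a)` is `K + K a`. -/
def adjoinSqrt (K : Subfield L) (a : L) (ha : a ^ 2 ∈ K) : Subfield L where
  carrier := {z | ∃ x ∈ K, ∃ y ∈ K, z = x + y * a}
  zero_mem' := ⟨0, K.zero_mem, 0, K.zero_mem, by simp⟩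
  one_mem' := ⟨1, K.one_mem, 0, K.zero_mem, by simp⟩
  add_mem' := by
    rintro _ _ ⟨x, hx, y, hy, rfl⟩ ⟨x', hx', y', hy', rfl⟩
    exact ⟨x + x', add_mem hx hx', y + y', add_mem hy hy', by ring⟩
  neg_mem' := by
    rintro _ ⟨x, hx, y, hy, rfl⟩
    exact ⟨-x, neg_mem hx, -y, neg_mem hy, by ring⟩
  mul_mem' := by
    rintro _ _ ⟨x, hx, y, hy, rfl⟩ ⟨x', hx', y', hy', rfl⟩
    exact ⟨x * x' + y * y' * a ^ 2, add_mem (mul_mem hx hx') (mul_mem (mul_mem hy hy') ha),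
      x * y' + y * x', add_mem (mul_mem hx hy') (mul_mem hy hx'), by ring⟩
  inv_mem' := by
    rintro _ ⟨x, hx, y, hy, rfl⟩
    by_cases haK : a ∈ K
    · exact ⟨(x + y * a)⁻¹, inv_mem (add_mem hx (mul_mem hy haK)), 0, K.zero_mem, by simp⟩
    by_cases hz : x + y * a = 0
    · exact ⟨0, K.zero_mem, 0, K.zero_mem, by simp [hz]⟩
    have hconj : x + -y * a ≠ 0 := by
      intro h
      obtain ⟨rfl, hy0⟩ := eq_zero_of_add_mul_eq_zero haK hx (neg_mem hy) h
      simp [neg_eq_zero.mp hy0] at hz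
    have hn : x ^ 2 - y ^ 2 * a ^ 2 ≠ 0 := by
      have := mul_ne_zero hz hconj
      contrapose! this
      linear_combination this
    have hnK : x ^ 2 - y ^ 2 * a ^ 2 ∈ K := sub_mem (pow_mem hx 2) (mul_mem (pow_mem hy 2) ha)
    refine ⟨x / (x ^ 2 - y ^ 2 * a ^ 2), div_mem hx hnK, -y / (x ^ 2 - y ^ 2 * a ^ 2),
      div_mem (neg_mem hy) hnK, ?_⟩
    field_simp
    ring

variable {K : Subfield L} {a z : L} {ha2 : a ^ 2 ∈ K}

theorem mem_adjoinSqrt : z ∈ K.adjoinSqrt a ha2 ↔ ∃ x ∈ K, ∃ y ∈ K, z = x + y * a := Iff.rfl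

theorem mem_adjoinSqrt_self : a ∈ K.adjoinSqrt a ha2 := ⟨0, K.zero_mem, 1, K.one_mem, by simp⟩

theorem mem_or_exists_eq_mul_of_sq_mem [NeZero (2 : L)] (ha : a ∉ K)
    (hz : z ∈ K.adjoinSqrt a ha2) (hz2 : z ^ 2 ∈ K) : z ∈ K ∨ ∃ y ∈ K, z = y * a := by
  obtain ⟨x, hx, y, hy, rfl⟩ := hz
  have hcoeff := eq_zero_of_add_mul_eq_zero ha
    (sub_mem (add_mem (pow_mem hx 2) (mul_mem (pow_mem hy 2) ha2)) hz2)
    (mul_mem (mul_mem (ofNat_mem K 2) hx) hy) (by ring)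
  rcases mul_eq_zero.mp hcoeff.2 with h | rfl
  · rcases mul_eq_zero.mp h with h2 | rfl
    · exact absurd h2 two_ne_zero
    · exact Or.inr ⟨y, hy, by ring⟩
  · exact Or.inl (by simpa using hx)

end Subfield

open Real

theorem sq_sqrt_four_add_sqrt_two : √(4 + √2) ^ 2 = 4 + √2 := sq_sqrt (by positivity)

theorem sq_sqrt_four_sub_sqrt_two : √(4 - √2) ^ 2 = 4 - √2 :=
  sq_sqrt (by linarith [sqrt_two_lt_three_halves])

theorem sqrt_two_notMem_fieldRange : √2 ∉ (Rat.castHom ℝ).fieldRange := by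
  simpa [RingHom.mem_fieldRange, Irrational] using irrational_sqrt_two

noncomputable def ratSqrtTwo : Subfield ℝ :=
  (Rat.castHom ℝ).fieldRange.adjoinSqrt √2 (by rw [sq_sqrt zero_le_two]; exact ofNat_mem _ 2)

theorem mem_ratSqrtTwo {z : ℝ} : z ∈ ratSqrtTwo ↔ ∃ x y : ℚ, z = x + y * √2 := by
  rw [ratSqrtTwo, Subfield.mem_adjoinSqrt]
  simp [RingHom.mem_fieldRange]

namespace ratSqrtTwo

theorem four_add_sqrt_two_mem : 4 + √2 ∈ ratSqrtTwo :=
  add_mem (ofNat_mem _ 4) Subfield.mem_adjoinSqrt_self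

theorem four_sub_sqrt_two_mem : 4 - √2 ∈ ratSqrtTwo :=
  sub_mem (ofNat_mem _ 4) Subfield.mem_adjoinSqrt_self

theorem sq_ne_fourteen {z : ℝ} (hz : z ∈ ratSqrtTwo) : z ^ 2 ≠ 14 := by
  intro h
  rcases Subfield.mem_or_exists_eq_mul_of_sq_mem sqrt_two_notMem_fieldRange hz
    ⟨14, by simp [h]⟩ with ⟨q, rfl⟩ | ⟨_, ⟨q, rfl⟩, rfl⟩
  · have hq : q ^ 2 = 14 := by exact_mod_cast (by simpa using h : (q : ℝ) ^ 2 = 14)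
    exact (by norm_num : ¬ IsSquare (14 : ℚ)) ⟨q, by rw [← sq, hq]⟩
  · have hq : q ^ 2 = 7 := by
      have h' : (q : ℝ) ^ 2 * 2 = 14 := by simpa [mul_pow] using h
      exact_mod_cast (by linarith : (q : ℝ) ^ 2 = 7)
    exact (by norm_num : ¬ IsSquare (7 : ℚ)) ⟨q, by rw [← sq, hq]⟩

/-- `p ^ 2 - 2 * c ^ 2` is the norm of `p + c √2`. -/
theorem isSquare_of_sq_eq_add_mul_sqrt_two {z : ℝ} (hz : z ∈ ratSqrtTwo) {p c : ℚ}
    (h : z ^ 2 = p + c * √2) : IsSquare (p ^ 2 - 2 * c ^ 2) := by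
  obtain ⟨x, y, rfl⟩ := mem_ratSqrtTwo.mp hz
  obtain ⟨h1, h2⟩ := Subfield.eq_zero_of_add_mul_eq_zero sqrt_two_notMem_fieldRange
    (RingHom.mem_fieldRange_self _ (x ^ 2 + 2 * y ^ 2 - p))
    (RingHom.mem_fieldRange_self _ (2 * x * y - c)) (by
      simp only [map_sub, map_add, map_mul, map_pow, map_ofNat, Rat.coe_castHom]
      linear_combination h - y ^ 2 * sq_sqrt (zero_le_two : (0 : ℝ) ≤ 2))
  rw [map_eq_zero] at h1 h2
  exact ⟨2 * x ^ 2 - p, by linear_combination (-4 * x ^ 2) * h1 + 2 * (c + 2 * x * y) * h2⟩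

theorem sq_ne_four_add_mul_sqrt_two {z : ℝ} (hz : z ∈ ratSqrtTwo) {c : ℚ} (hc : c ^ 2 = 1) :
    z ^ 2 ≠ 4 + c * √2 := by
  intro h
  have hnorm : (4 : ℚ) ^ 2 - 2 * c ^ 2 = 14 := by rw [hc]; norm_num
  have hsq := isSquare_of_sq_eq_add_mul_sqrt_two hz (p := 4) (by simpa using h)
  exact (by norm_num : ¬ IsSquare (14 : ℚ)) (hnorm ▸ hsq)

end ratSqrtTwo

noncomputable def ratSqrtFourAddSqrtTwo : Subfield ℝ :=
  ratSqrtTwo.adjoinSqrt √(4 + √2) <| by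
    rw [sq_sqrt_four_add_sqrt_two]; exact ratSqrtTwo.four_add_sqrt_two_mem

theorem sqrt_four_sub_sqrt_two_notMem : √(4 - √2) ∉ ratSqrtFourAddSqrtTwo := by
  intro hβ
  have hα : √(4 + √2) ∉ ratSqrtTwo := fun hα ↦
    ratSqrtTwo.sq_ne_four_add_mul_sqrt_two hα (c := 1) (by norm_num)
      (by simpa using sq_sqrt_four_add_sqrt_two)
  have hβ2 : √(4 - √2) ^ 2 ∈ ratSqrtTwo := by
    rw [sq_sqrt_four_sub_sqrt_two]; exact ratSqrtTwo.four_sub_sqrt_two_mem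
  rcases Subfield.mem_or_exists_eq_mul_of_sq_mem hα hβ hβ2 with hβ | ⟨y, hy, hβy⟩
  · exact ratSqrtTwo.sq_ne_four_add_mul_sqrt_two hβ (c := -1) (by norm_num)
      (by simpa [sub_eq_add_neg] using sq_sqrt_four_sub_sqrt_two)
  · refine ratSqrtTwo.sq_ne_fourteen (mul_mem hy ratSqrtTwo.four_add_sqrt_two_mem) ?_
    calc (y * (4 + √2)) ^ 2 = (y * √(4 + √2)) ^ 2 * (4 + √2) := by
          rw [mul_pow, mul_pow, sq_sqrt_four_add_sqrt_two]; ring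
      _ = 14 := by
          rw [← hβy, sq_sqrt_four_sub_sqrt_two]
          linear_combination -sq_sqrt (zero_le_two : (0 : ℝ) ≤ 2)

/-- `√(4 − √2)` does not lie in the subfield `ℚ(√(4 + √2))` of `ℝ`; in
particular the subfields `ℚ(√(4 + √2))` and `ℚ(√(4 − √2))` are distinct. -/
theorem statement15 :
    Real.sqrt (4 - Real.sqrt 2) ∉
      Subfield.closure {Real.sqrt (4 + Real.sqrt 2)} ∧
    Subfield.closure {Real.sqrt (4 + Real.sqrt 2)} ≠
      Subfield.closure {Real.sqrt (4 - Real.sqrt 2)} := by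
  have hle : Subfield.closure {√(4 + √2)} ≤ ratSqrtFourAddSqrtTwo :=
    Subfield.closure_le.mpr (Set.singleton_subset_iff.mpr Subfield.mem_adjoinSqrt_self)
  have hβ : √(4 - √2) ∉ Subfield.closure {√(4 + √2)} :=
    fun h ↦ sqrt_four_sub_sqrt_two_notMem (hle h)
  exact ⟨hβ, fun h ↦ hβ (h ▸ Subfield.subset_closure rfl)⟩
end
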